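/- arXiv:2010.04588 — 3 statements merged into one kernel-verified Lean document; each statement's English description precedes it below -/
import Mathlib

section
/- For all positive integers i and j, the 2×2 rational matrix with first row ((2^(2i-1)-1)·(2^(2j-1)-1), 2^(2(i+j)-1)-1) and second row (1/4, -1/2) has determinant equal to -(1/4)·(2^(2i)-1)·(2^(2j)-1); in particular this determinant is strictly negative, so the matrix is nonsingular. -/
open Matrix

/-- For all positive integers `i` and `j`, the 2×2 rational matrix with first row
`((2^(2i-1)-1)·(2^(2j-1)-1), 2^(2(i+j)-1)-1)` and second row `(1/4, -1/2)` has determinant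
`-(1/4)·(2^(2i)-1)·(2^(2j)-1)`; in particular this determinant is strictly negative, so
the matrix is nonsingular. -/
theorem det_reduced_coefficient_matrix (i j : ℕ) (hi : 0 < i) (hj : 0 < j) :
    (!![((2:ℚ)^(2*i-1) - 1) * ((2:ℚ)^(2*j-1) - 1), (2:ℚ)^(2*(i+j)-1) - 1;
        (1:ℚ)/4, -(1:ℚ)/2] : Matrix (Fin 2) (Fin 2) ℚ).det
      = -(1/4) * ((2:ℚ)^(2*i) - 1) * ((2:ℚ)^(2*j) - 1) ∧
    (!![((2:ℚ)^(2*i-1) - 1) * ((2:ℚ)^(2*j-1) - 1), (2:ℚ)^(2*(i+j)-1) - 1;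
        (1:ℚ)/4, -(1:ℚ)/2] : Matrix (Fin 2) (Fin 2) ℚ).det < 0 ∧
    IsUnit (!![((2:ℚ)^(2*i-1) - 1) * ((2:ℚ)^(2*j-1) - 1), (2:ℚ)^(2*(i+j)-1) - 1;
        (1:ℚ)/4, -(1:ℚ)/2] : Matrix (Fin 2) (Fin 2) ℚ) := by
  obtain ⟨k, rfl⟩ := Nat.exists_eq_add_of_lt hi
  obtain ⟨l, rfl⟩ := Nat.exists_eq_add_of_lt hj
  have h1 : 2 * (0 + k + 1) - 1 = 2 * k + 1 := by omega
  have h2 : 2 * (0 + l + 1) - 1 = 2 * l + 1 := by omega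
  have h3 : 2 * ((0 + k + 1) + (0 + l + 1)) - 1 = 2 * k + 2 * l + 3 := by omega
  have h4 : 2 * (0 + k + 1) = 2 * k + 2 := by omega
  have h5 : 2 * (0 + l + 1) = 2 * l + 2 := by omega
  rw [Matrix.det_fin_two_of, h1, h2, h3, h4, h5]
  have hdet : ((2:ℚ)^(2*k+1) - 1) * ((2:ℚ)^(2*l+1) - 1) * (-(1:ℚ)/2)
      - ((2:ℚ)^(2*k+2*l+3) - 1) * ((1:ℚ)/4)
      = -(1/4) * ((2:ℚ)^(2*k+2) - 1) * ((2:ℚ)^(2*l+2) - 1) := by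
    rw [pow_add, pow_add, pow_add, pow_add, pow_add]
    ring
  refine ⟨hdet, ?_, ?_⟩
  · rw [hdet]
    have hk : (1:ℚ) < 2^(2*k+2) := one_lt_pow₀ (by norm_num) (by omega)
    have hl : (1:ℚ) < 2^(2*l+2) := one_lt_pow₀ (by norm_num) (by omega)
    nlinarith
  · rw [Matrix.isUnit_iff_isUnit_det, Matrix.det_fin_two_of, hdet, isUnit_iff_ne_zero]
    have hk : (1:ℚ) < 2^(2*k+2) := one_lt_pow₀ (by norm_num) (by omega)
    have hl : (1:ℚ) < 2^(2*l+2) := one_lt_pow₀ (by norm_num) (by omega)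
    nlinarith
end

section
/- For all positive integers i and j, one has s_i·s_j·a_{i+j} − s_{i+j}·a_i·a_j ≠ 0 in ℚ; equivalently, the matrix with rows (s_i·s_j, s_{i+j}) and (a_i·a_j, a_{i+j}) is nonsingular. -/
/-- The coefficient of the Pontryagin class `p_k` in Hirzebruch's `L`-polynomial:
`s_k = 2^(2k)·(2^(2k-1)−1)·B_{2k}/(2k)!`. -/
noncomputable def sCoeff (k : ℕ) : ℚ :=
  2 ^ (2 * k) * (2 ^ (2 * k - 1) - 1) * bernoulli (2 * k) / (Nat.factorial (2 * k))

/-- The coefficient of the Pontryagin class `p_k` in the `Â`-polynomial: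
`a_k = −B_{2k}/(2·(2k)!)`. -/
noncomputable def aCoeff (k : ℕ) : ℚ :=
  -bernoulli (2 * k) / (2 * Nat.factorial (2 * k))

lemma bernoulli_two_mul_ne_zero {k : ℕ} (hk : k ≠ 0) : bernoulli (2 * k) ≠ 0 := by
  intro h
  have hz := riemannZeta_two_mul_nat hk
  rw [h] at hz
  have hne : riemannZeta (2 * k) ≠ 0 := by
    apply riemannZeta_ne_zero_of_one_lt_re
    have h2 : (2 * (k:ℂ)) = ((2*k : ℕ) : ℂ) := by push_cast; ring
    rw [h2, Complex.natCast_re]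
    exact_mod_cast (by omega : (1:ℕ) < 2*k)
  apply hne
  rw [hz]
  push_cast
  ring

/-- For all positive integers `i` and `j`, one has
`s_i·s_j·a_{i+j} − s_{i+j}·a_i·a_j ≠ 0` in `ℚ`; equivalently, the matrix with rows
`(s_i·s_j, s_{i+j})` and `(a_i·a_j, a_{i+j})` is nonsingular. -/
theorem LA_coefficient_matrix_nonsingular (i j : ℕ) (hi : 0 < i) (hj : 0 < j) :
    sCoeff i * sCoeff j * aCoeff (i + j) - sCoeff (i + j) * (aCoeff i * aCoeff j) ≠ 0 := by
  have hBi := bernoulli_two_mul_ne_zero hi.ne'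
  have hBj := bernoulli_two_mul_ne_zero hj.ne'
  have hBij := bernoulli_two_mul_ne_zero (by omega : i + j ≠ 0)
  have hFi : ((2*i).factorial : ℚ) ≠ 0 := Nat.cast_ne_zero.mpr (Nat.factorial_ne_zero _)
  have hFj : ((2*j).factorial : ℚ) ≠ 0 := Nat.cast_ne_zero.mpr (Nat.factorial_ne_zero _)
  have hFij : ((2*(i+j)).factorial : ℚ) ≠ 0 := Nat.cast_ne_zero.mpr (Nat.factorial_ne_zero _)
  have hc : ∀ k : ℕ, 0 < k → (0:ℚ) < 2 ^ (2*k) * (2 ^ (2*k-1) - 1) := by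
    intro k hk
    have h1 : (1:ℚ) < 2 ^ (2*k-1) := one_lt_pow₀ (by norm_num) (by omega)
    exact mul_pos (by positivity) (sub_pos.mpr h1)
  have key : sCoeff i * sCoeff j * aCoeff (i + j) - sCoeff (i + j) * (aCoeff i * aCoeff j)
      = -(((bernoulli (2*i) : ℚ) / (2*i).factorial) * ((bernoulli (2*j) : ℚ) / (2*j).factorial)
          * ((bernoulli (2*(i+j)) : ℚ) / (2*(i+j)).factorial))
        * ((2 ^ (2*i) * (2 ^ (2*i-1) - 1)) * (2 ^ (2*j) * (2 ^ (2*j-1) - 1)) / 2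
            + (2 ^ (2*(i+j)) * (2 ^ (2*(i+j)-1) - 1)) / 4) := by
    unfold sCoeff aCoeff
    field_simp
    ring
  rw [key]
  apply mul_ne_zero
  · exact neg_ne_zero.mpr (mul_ne_zero (mul_ne_zero (div_ne_zero hBi hFi) (div_ne_zero hBj hFj))
      (div_ne_zero hBij hFij))
  · have := hc i hi
    have := hc j hj
    have := hc (i+j) (by omega)
    positivity
end

section
/- Let i and j be positive integers, let λ = 2 if i = j and λ = 1 otherwise, and set s_{i,j} := (s_i·s_j − s_{i+j})/λ and a_{i,j} := (a_i·a_j − a_{i+j})/λ. Then for all rational numbers x and y with y ≠ 0: if s_{i+j}·x + s_{i,j}·y = 0, then a_{i+j}·x + a_{i,j}·y ≠ 0. -/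
/-- The ratio `s_k / a_k`. -/
def cFactor (k : ℕ) : ℚ := -(2 ^ (2 * k + 1) * (2 ^ (2 * k - 1) - 1))

lemma sCoeff_eq (k : ℕ) : sCoeff k = cFactor k * aCoeff k := by
  unfold sCoeff cFactor aCoeff
  have hF : ((Nat.factorial (2 * k) : ℚ)) ≠ 0 :=
    Nat.cast_ne_zero.mpr (Nat.factorial_ne_zero _)
  field_simp
  ring

lemma aCoeff_ne_zero {k : ℕ} (hk : k ≠ 0) : aCoeff k ≠ 0 := by
  unfold aCoeff
  have hF : ((Nat.factorial (2 * k) : ℚ)) ≠ 0 :=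
    Nat.cast_ne_zero.mpr (Nat.factorial_ne_zero _)
  have hB := bernoulli_two_mul_ne_zero hk
  intro h
  rw [div_eq_zero_iff] at h
  rcases h with h | h
  · exact hB (by linarith [neg_eq_zero.mp h])
  · exact absurd h (by positivity)

lemma cFactor_neg {k : ℕ} (hk : 0 < k) : cFactor k < 0 := by
  unfold cFactor
  have h1 : (1 : ℚ) < 2 ^ (2 * k - 1) := by
    apply one_lt_pow₀ (by norm_num)
    omega
  have h2 : (0 : ℚ) < 2 ^ (2 * k + 1) := by positivity
  nlinarith

/-- Let `i` and `j` be positive integers, let `λ = 2` if `i = j` and `λ = 1` otherwise, and set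
`s_{i,j} := (s_i·s_j − s_{i+j})/λ` and `a_{i,j} := (a_i·a_j − a_{i+j})/λ`. Then for all rational
`x` and `y` with `y ≠ 0`: if `s_{i+j}·x + s_{i,j}·y = 0`, then `a_{i+j}·x + a_{i,j}·y ≠ 0`.
(Vanishing signature plus nonzero `p_i·p_j`-number forces nonvanishing `Â`-genus.) -/
theorem vanishing_signature_nonvanishing_Ahat (i j : ℕ) (hi : 0 < i) (hj : 0 < j)
    (lam : ℚ) (hlam : lam = if i = j then 2 else 1)
    (sij aij : ℚ)
    (hsij : sij = (sCoeff i * sCoeff j - sCoeff (i + j)) / lam)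
    (haij : aij = (aCoeff i * aCoeff j - aCoeff (i + j)) / lam)
    (x y : ℚ) (hy : y ≠ 0)
    (hsig : sCoeff (i + j) * x + sij * y = 0) :
    aCoeff (i + j) * x + aij * y ≠ 0 := by
  intro hA
  have hlam0 : lam ≠ 0 := by rw [hlam]; split <;> norm_num
  have hai : aCoeff i ≠ 0 := aCoeff_ne_zero hi.ne'
  have haj : aCoeff j ≠ 0 := aCoeff_ne_zero hj.ne'
  have han : aCoeff (i + j) ≠ 0 := aCoeff_ne_zero (by omega)
  -- determinant vanishes
  have h1 : (aCoeff (i + j) * sij - sCoeff (i + j) * aij) * y = 0 := by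
    linear_combination aCoeff (i + j) * hsig - sCoeff (i + j) * hA
  have hdet : aCoeff (i + j) * sij = sCoeff (i + j) * aij := by
    rcases mul_eq_zero.mp h1 with h | h
    · linarith [sub_eq_zero.mp h]
    · exact absurd h hy
  rw [hsij, haij] at hdet
  have h2 : aCoeff (i + j) * (sCoeff i * sCoeff j - sCoeff (i + j)) =
      sCoeff (i + j) * (aCoeff i * aCoeff j - aCoeff (i + j)) := by
    field_simp at hdet
    linarith
  rw [sCoeff_eq i, sCoeff_eq j, sCoeff_eq (i + j)] at h2
  have hprod : aCoeff (i + j) * aCoeff i * aCoeff j ≠ 0 := by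
    exact mul_ne_zero (mul_ne_zero han hai) haj
  have hfin : cFactor i * cFactor j = cFactor (i + j) := by
    apply mul_left_cancel₀ hprod
    linear_combination h2
  have hci := cFactor_neg hi
  have hcj := cFactor_neg hj
  have hcn := cFactor_neg (show 0 < i + j by omega)
  nlinarith
end
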